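/- There is no metric space on four points whose betweenness is isomorphic to the betweenness of Q(4). That is, for every function ρ : W → W → ℝ on a four-element set W satisfying ρ x y ≥ 0, ρ x y = 0 ↔ x = y, ρ x y = ρ y x, and the triangle inequality, the betweenness B(ρ) is not isomorphic to B(Q(4)) = {(p,q,r), (r,p,q), (s,q,p), (q,p,s)}. -/

import Mathlib

/-- A quasi-metric on `V`: nonnegative, vanishing exactly on the diagonal,
and satisfying the (directed) triangle inequality. -/
def IsQuasiMetric {V : Type*} (d : V → V → ℝ) : Prop :=
  (∀ x y, 0 ≤ d x y) ∧ (∀ x y, d x y = 0 ↔ x = y) ∧ (∀ x y z, d x z ≤ d x y + d y z)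

/-- Betweenness: `y` lies between `x` and `z` (all three pairwise distinct). -/
def BtwQM {V : Type*} (d : V → V → ℝ) (x y z : V) : Prop :=
  x ≠ y ∧ y ≠ z ∧ x ≠ z ∧ d x z = d x y + d y z

/-- The line through `x` and `y`. -/
def lineQM {V : Type*} (d : V → V → ℝ) (x y : V) : Set V :=
  {z | d z y = d z x + d x y ∨ d x y = d x z + d z y ∨ d x z = d x y + d y z}

/-- The set of all lines of the space. -/
def linesQM {V : Type*} (d : V → V → ℝ) : Set (Set V) :=
  {ℓ | ∃ x y, x ≠ y ∧ ℓ = lineQM d x y}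

/-- The four points of the space `Q(4)`. -/
inductive P4 : Type
  | p | s | q | r
deriving DecidableEq

open P4

/-- The quasi-metric of the space `Q(4)`. -/
def dQ4 : P4 → P4 → ℝ
  | p, p => 0 | p, s => 1 | p, q => 1 | p, r => 3
  | s, p => 3 | s, s => 0 | s, q => 2 | s, r => 3
  | q, p => 1 | q, s => 2 | q, q => 0 | q, r => 2
  | r, p => 1 | r, s => 1 | r, q => 2 | r, r => 0

/-- The betweenness of `Q(4)`. -/
def BQ4 : Set (P4 × P4 × P4) := {(p, q, r), (r, p, q), (s, q, p), (q, p, s)}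

/-! Since `d x z = d x y + d y z` is invariant under swapping `x` and `z` when `d` is symmetric,
the betweenness of a metric is closed under reversing triples. The betweenness of `Q(4)` is not:
it contains `(p, q, r)` but not `(r, q, p)`. -/

theorem BtwQM.symm {V : Type*} {d : V → V → ℝ} (hd : ∀ x y, d x y = d y x) {x y z : V}
    (h : BtwQM d x y z) : BtwQM d z y x := by
  obtain ⟨hxy, hyz, hxz, hsum⟩ := h
  refine ⟨hyz.symm, hxy.symm, hxz.symm, ?_⟩
  rw [hd z x, hsum, hd x y, hd y z, add_comm]

theorem stmt_4_general (W : Type)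
    (ρ : W → W → ℝ)
    (hsymm : ∀ x y, ρ x y = ρ y x) :
    ¬ ∃ f : P4 ≃ W, ∀ x y z : P4,
        (x, y, z) ∈ BQ4 ↔ BtwQM ρ (f x) (f y) (f z) := by
  rintro ⟨f, hf⟩
  have hpqr : BtwQM ρ (f p) (f q) (f r) := (hf p q r).mp (by simp [BQ4])
  have hrqp : (r, q, p) ∈ BQ4 := (hf r q p).mpr (hpqr.symm hsymm)
  simp [BQ4] at hrqp

/-- no metric space on four points has a betweenness isomorphic to
that of `Q(4)`. -/
theorem stmt_4 (W : Type) [Fintype W] (hW : Fintype.card W = 4)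
    (ρ : W → W → ℝ)
    (hpos : ∀ x y, 0 ≤ ρ x y)
    (hzero : ∀ x y, ρ x y = 0 ↔ x = y)
    (hsymm : ∀ x y, ρ x y = ρ y x)
    (htri : ∀ x y z, ρ x z ≤ ρ x y + ρ y z) :
    ¬ ∃ f : P4 ≃ W, ∀ x y z : P4,
        (x, y, z) ∈ BQ4 ↔ BtwQM ρ (f x) (f y) (f z) :=
  stmt_4_general W ρ hsymm
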